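/- For every natural number k ≥ 1, the set of natural numbers n with Cₙ ≡ 0 (mod 2^k) has asymptotic density 1; that is, the limit as N → ∞ of (1/N)·#{n < N : Cₙ ≡ 0 mod 2^k} equals 1. -/

import Mathlib

/-!
Legendre's formula `ν₂(m!) = m - s₂(m)`, where `s₂` is the binary digit sum, together with
`s₂(2n) = s₂(n)` and `Cₙ · (n+1)! · n! = (2n)!`, gives Kummer's `ν₂(Cₙ) = s₂(n+1) - 1`.
So `2^k ∤ Cₙ` forces `s₂(n+1) ≤ k`. At most `(L+1)^k` numbers below `2^L` have at most `k`
binary ones, hence at most `(log₂ N + 2)^k = o(N)` of the `n < N` are exceptional.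
-/

open Filter Finset Topology
open scoped Nat

namespace Nat

theorem digits_sum_eq_mod_add_digits_sum_div {b : ℕ} (hb : 1 < b) (m : ℕ) :
    (b.digits m).sum = m % b + (b.digits (m / b)).sum := by
  rcases eq_zero_or_pos m with rfl | hm
  · simp
  · rw [digits_def' hb hm, List.sum_cons]

theorem digits_sum_base_mul {b : ℕ} (hb : 1 < b) (m : ℕ) :
    (b.digits (b * m)).sum = (b.digits m).sum := by
  rcases eq_zero_or_pos m with rfl | hm
  · simp
  · rw [digits_base_mul hb hm, List.sum_cons, zero_add]

theorem padicValNat_two_factorial_add_digits_sum (n : ℕ) :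
    padicValNat 2 n ! + (digits 2 n).sum = n := by
  have h := sub_one_mul_padicValNat_factorial (p := 2) n
  have := digit_sum_le 2 n
  simp only [Nat.add_one_sub_one, one_mul] at h
  omega

end Nat

theorem catalan_ne_zero (n : ℕ) : catalan n ≠ 0 :=
  right_ne_zero_of_mul <|
    (succ_mul_catalan_eq_centralBinom n).trans_ne (Nat.centralBinom_ne_zero n)

theorem catalan_mul_factorial_mul_factorial (n : ℕ) :
    catalan n * ((n + 1)! * n !) = (2 * n)! := by
  have h := Nat.choose_mul_factorial_mul_factorial (n := 2 * n) (k := n) (by omega)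
  rw [show 2 * n - n = n by omega, ← Nat.centralBinom_eq_two_mul_choose,
    ← succ_mul_catalan_eq_centralBinom] at h
  rw [← h, Nat.factorial_succ]
  ring

theorem padicValNat_two_catalan_add_one (n : ℕ) :
    padicValNat 2 (catalan n) + 1 = (Nat.digits 2 (n + 1)).sum := by
  have hval := congrArg (padicValNat 2) (catalan_mul_factorial_mul_factorial n)
  rw [padicValNat.mul (catalan_ne_zero n) (by positivity),
    padicValNat.mul (by positivity) (by positivity)] at hval
  have h₁ := Nat.padicValNat_two_factorial_add_digits_sum (n + 1)
  have h₂ := Nat.padicValNat_two_factorial_add_digits_sum n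
  have h₃ := Nat.padicValNat_two_factorial_add_digits_sum (2 * n)
  rw [Nat.digits_sum_base_mul one_lt_two] at h₃
  omega

theorem catalan_modEq_zero_iff (n k : ℕ) :
    catalan n ≡ 0 [MOD 2 ^ k] ↔ k < (Nat.digits 2 (n + 1)).sum := by
  rw [Nat.modEq_zero_iff_dvd, padicValNat_dvd_iff_le (catalan_ne_zero n),
    ← padicValNat_two_catalan_add_one]
  omega

theorem card_filter_range_two_pow_succ_digits_sum_le (L j : ℕ) :
    #{m ∈ range (2 ^ (L + 1)) | (Nat.digits 2 m).sum ≤ j} ≤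
      #{m ∈ range (2 ^ L) | (Nat.digits 2 m).sum ≤ j} +
        #{m ∈ range (2 ^ L) | (Nat.digits 2 m).sum + 1 ≤ j} := by
  have hsplit : {m ∈ range (2 ^ (L + 1)) | (Nat.digits 2 m).sum ≤ j} ⊆
      {m ∈ range (2 ^ L) | (Nat.digits 2 m).sum ≤ j}.image (2 * ·) ∪
        {m ∈ range (2 ^ L) | (Nat.digits 2 m).sum + 1 ≤ j}.image (2 * · + 1) := by
    intro m hm
    simp only [mem_filter, mem_range, pow_succ] at hm
    have hs := Nat.digits_sum_eq_mod_add_digits_sum_div one_lt_two m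
    simp only [mem_union, mem_image, mem_filter, mem_range]
    rcases Nat.mod_two_eq_zero_or_one m with h | h
    · exact .inl ⟨m / 2, ⟨by omega, by omega⟩, by omega⟩
    · exact .inr ⟨m / 2, ⟨by omega, by omega⟩, by omega⟩
  exact (card_le_card hsplit).trans
    ((card_union_le _ _).trans (_root_.add_le_add card_image_le card_image_le))

theorem card_filter_range_two_pow_digits_sum_le (L j : ℕ) :
    #{m ∈ range (2 ^ L) | (Nat.digits 2 m).sum ≤ j} ≤ (L + 1) ^ j := by
  induction L generalizing j with
  | zero => exact (card_filter_le _ _).trans (by simp)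
  | succ L ih =>
    refine (card_filter_range_two_pow_succ_digits_sum_le L j).trans ?_
    cases j with
    | zero => simpa using ih 0
    | succ j =>
      simp only [Nat.add_le_add_iff_right]
      calc _ ≤ (L + 1) ^ (j + 1) + (L + 1) ^ j := _root_.add_le_add (ih _) (ih _)
        _ = (L + 2) * (L + 1) ^ j := by ring
        _ ≤ (L + 1 + 1) ^ (j + 1) := by
          rw [_root_.pow_succ']; gcongr; omega

theorem card_filter_catalan_not_modEq_le (k N : ℕ) :
    #{n ∈ range N | ¬ catalan n ≡ 0 [MOD 2 ^ k]} ≤ (Nat.log 2 N + 2) ^ k := by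
  refine (card_le_card_of_injOn (· + 1) ?_ (add_left_injective 1).injOn).trans
    (card_filter_range_two_pow_digits_sum_le (Nat.log 2 N + 1) k)
  intro n hn
  simp only [coe_filter, mem_range, Set.mem_ofPred_eq, catalan_modEq_zero_iff, not_lt] at hn ⊢
  have := Nat.lt_pow_succ_log_self one_lt_two N
  exact ⟨by omega, hn.2⟩

theorem tendsto_pow_log_two_add_two_div_atTop (k : ℕ) :
    Tendsto (fun N : ℕ => ((Nat.log 2 N + 2 : ℕ) : ℝ) ^ k / N) atTop (𝓝 0) := by
  have hgeom : Tendsto (fun L : ℕ => 4 * (((L + 2 : ℕ) : ℝ) ^ k / 2 ^ (L + 2))) atTop (𝓝 0) := by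
    simpa using ((tendsto_pow_const_div_const_pow_of_one_lt k one_lt_two).comp
      (tendsto_add_atTop_nat 2)).const_mul 4
  have hlog : Tendsto (Nat.log 2) atTop atTop :=
    tendsto_atTop_atTop.2 fun b => ⟨2 ^ b, fun N hN => Nat.le_log_of_pow_le one_lt_two hN⟩
  refine squeeze_zero' (.of_forall fun N => by positivity) ?_ (hgeom.comp hlog)
  filter_upwards [eventually_ne_atTop 0] with N hN
  have hpow : (2 : ℝ) ^ Nat.log 2 N ≤ N := by exact_mod_cast Nat.pow_log_le_self 2 hN
  calc ((Nat.log 2 N + 2 : ℕ) : ℝ) ^ k / N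
      ≤ ((Nat.log 2 N + 2 : ℕ) : ℝ) ^ k / 2 ^ Nat.log 2 N := by gcongr
    _ = 4 * (((Nat.log 2 N + 2 : ℕ) : ℝ) ^ k / 2 ^ (Nat.log 2 N + 2)) := by
      rw [pow_add]; field_simp; norm_num

theorem tendsto_ncard_div_of_tendsto_card_not_div {p : ℕ → Prop} [DecidablePred p]
    (h : Tendsto (fun N : ℕ => (#{n ∈ range N | ¬ p n} : ℝ) / N) atTop (𝓝 0)) :
    Tendsto (fun N : ℕ => ({n | n < N ∧ p n}.ncard : ℝ) / N) atTop (𝓝 1) := by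
  have hcompl : Tendsto (fun N : ℕ => 1 - (#{n ∈ range N | ¬ p n} : ℝ) / N) atTop (𝓝 1) := by
    simpa using tendsto_const_nhds.sub h
  refine hcompl.congr' ?_
  filter_upwards [eventually_ne_atTop 0] with N hN
  have hset : {n | n < N ∧ p n} = ↑({n ∈ range N | p n}) := by ext; simp
  have hcard : (#{n ∈ range N | p n} : ℝ) = N - #{n ∈ range N | ¬ p n} := by
    rw [eq_sub_iff_add_eq]
    exact_mod_cast (card_filter_add_card_filter_not p).trans (card_range N)
  rw [hset, Set.ncard_coe_finset, hcard, sub_div, div_self (by positivity)]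

theorem catalan_modEq_zero_density_one_general (k : ℕ) :
    Tendsto (fun N : ℕ =>
        ({n : ℕ | n < N ∧ catalan n ≡ 0 [MOD 2 ^ k]}.ncard : ℝ) / N)
      atTop (nhds 1) := by
  refine tendsto_ncard_div_of_tendsto_card_not_div
    (squeeze_zero (fun N => by positivity) (fun N => ?_) (tendsto_pow_log_two_add_two_div_atTop k))
  gcongr
  exact_mod_cast card_filter_catalan_not_modEq_le k N

/-- For `k ≥ 1`, the set of `n` with `Cₙ ≡ 0 (mod 2^k)` has asymptotic density 1. -/
theorem catalan_modEq_zero_density_one (k : ℕ) (hk : 1 ≤ k) :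
    Tendsto (fun N : ℕ =>
        ({n : ℕ | n < N ∧ catalan n ≡ 0 [MOD 2 ^ k]}.ncard : ℝ) / N)
      atTop (nhds 1) :=
  catalan_modEq_zero_density_one_general k
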